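/- Negative identity principle: for every negative proposition A⁻ and context Γ, the inversion sequent Γ, A⁻ ; · ⊢ A⁻ is derivable in the focused sequent calculus for polarized intuitionistic logic. -/

import Mathlib

namespace StructuralFocalization

/- Polarized propositional intuitionistic logic -/
mutual
inductive PProp : Type
  | atom : Nat → PProp
  | down : NProp → PProp
  | bot  : PProp
  | or   : PProp → PProp → PProp
  | top  : PProp
  | and  : PProp → PProp → PProp
inductive NProp : Type
  | atom : Nat → NProp
  | up   : PProp → NProp
  | imp  : PProp → NProp → NProp
  | top  : NProp
  | and  : NProp → NProp → NProp
end

/- Hypotheses: negative propositions or suspended positives ⟨A⁺⟩ -/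
inductive Hyp : Type
  | neg  : NProp → Hyp
  | susp : PProp → Hyp

/- Succedents: A⁺, A⁻, or suspended ⟨A⁻⟩ -/
inductive Succ : Type
  | pos  : PProp → Succ
  | neg  : NProp → Succ
  | susp : NProp → Succ

abbrev Ctx := List Hyp

def Succ.stable : Succ → Prop
  | .pos _ => True
  | .susp _ => True
  | .neg _ => False

def Hyp.suspNormal : Hyp → Prop
  | .susp (PProp.atom _) => True
  | .susp _ => False
  | .neg _ => True

def Ctx.suspNormal (Γ : Ctx) : Prop := ∀ h ∈ Γ, h.suspNormal

def Succ.suspNormal : Succ → Prop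
  | .susp (NProp.atom _) => True
  | .susp _ => False
  | _ => True

/- The focused sequent calculus (Figures 3 and 4 of "Structural focalization",
   with the generalized id⁺/id⁻ rules for arbitrary suspended propositions). -/
mutual
/-- Right focus: Γ ⊢ [A⁺] -/
inductive RFoc : Ctx → PProp → Prop
  | idP {Γ A} : Hyp.susp A ∈ Γ → RFoc Γ A
  | downR {Γ A} : Inv Γ [] (Succ.neg A) → RFoc Γ (PProp.down A)
  | orR1 {Γ A B} : RFoc Γ A → RFoc Γ (PProp.or A B)
  | orR2 {Γ A B} : RFoc Γ B → RFoc Γ (PProp.or A B)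
  | topR {Γ} : RFoc Γ PProp.top
  | andR {Γ A B} : RFoc Γ A → RFoc Γ B → RFoc Γ (PProp.and A B)
/-- Inversion: Γ ; Ω ⊢ U -/
inductive Inv : Ctx → List PProp → Succ → Prop
  | focR {Γ A} : RFoc Γ A → Inv Γ [] (Succ.pos A)
  | focL {Γ A U} : Hyp.neg A ∈ Γ → Succ.stable U → LFoc Γ A U → Inv Γ [] U
  | etaP {Γ p Ω U} : Inv (Hyp.susp (PProp.atom p) :: Γ) Ω U → Inv Γ (PProp.atom p :: Ω) U
  | downL {Γ A Ω U} : Inv (Hyp.neg A :: Γ) Ω U → Inv Γ (PProp.down A :: Ω) U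
  | botL {Γ Ω U} : Inv Γ (PProp.bot :: Ω) U
  | orL {Γ A B Ω U} : Inv Γ (A :: Ω) U → Inv Γ (B :: Ω) U → Inv Γ (PProp.or A B :: Ω) U
  | topPL {Γ Ω U} : Inv Γ Ω U → Inv Γ (PProp.top :: Ω) U
  | andPL {Γ A B Ω U} : Inv Γ (A :: B :: Ω) U → Inv Γ (PProp.and A B :: Ω) U
  | etaN {Γ p} : Inv Γ [] (Succ.susp (NProp.atom p)) → Inv Γ [] (Succ.neg (NProp.atom p))
  | upR {Γ A} : Inv Γ [] (Succ.pos A) → Inv Γ [] (Succ.neg (NProp.up A))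
  | impR {Γ A B} : Inv Γ [A] (Succ.neg B) → Inv Γ [] (Succ.neg (NProp.imp A B))
  | topNR {Γ} : Inv Γ [] (Succ.neg NProp.top)
  | andNR {Γ A B} : Inv Γ [] (Succ.neg A) → Inv Γ [] (Succ.neg B) →
      Inv Γ [] (Succ.neg (NProp.and A B))
/-- Left focus: Γ ; [A⁻] ⊢ U -/
inductive LFoc : Ctx → NProp → Succ → Prop
  | idN {Γ A} : LFoc Γ A (Succ.susp A)
  | upL {Γ A U} : Inv Γ [A] U → LFoc Γ (NProp.up A) U
  | impL {Γ A B U} : RFoc Γ A → LFoc Γ B U → LFoc Γ (NProp.imp A B) U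
  | andL1 {Γ A B U} : LFoc Γ A U → LFoc Γ (NProp.and A B) U
  | andL2 {Γ A B U} : LFoc Γ B U → LFoc Γ (NProp.and A B) U
end

/- Unpolarized propositions and Kleene's G3 -/
inductive UProp : Type
  | atom : Nat → UProp
  | bot  : UProp
  | or   : UProp → UProp → UProp
  | top  : UProp
  | and  : UProp → UProp → UProp
  | imp  : UProp → UProp → UProp

inductive G3 : List UProp → UProp → Prop
  | init {Γ p} : UProp.atom p ∈ Γ → G3 Γ (UProp.atom p)
  | botL {Γ Q} : UProp.bot ∈ Γ → G3 Γ Q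
  | orR1 {Γ A B} : G3 Γ A → G3 Γ (UProp.or A B)
  | orR2 {Γ A B} : G3 Γ B → G3 Γ (UProp.or A B)
  | orL {Γ A B Q} : UProp.or A B ∈ Γ → G3 (A :: Γ) Q → G3 (B :: Γ) Q → G3 Γ Q
  | topR {Γ} : G3 Γ UProp.top
  | andR {Γ A B} : G3 Γ A → G3 Γ B → G3 Γ (UProp.and A B)
  | andL1 {Γ A B Q} : UProp.and A B ∈ Γ → G3 (A :: Γ) Q → G3 Γ Q
  | andL2 {Γ A B Q} : UProp.and A B ∈ Γ → G3 (B :: Γ) Q → G3 Γ Q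
  | impR {Γ A B} : G3 (A :: Γ) B → G3 Γ (UProp.imp A B)
  | impL {Γ A B Q} : UProp.imp A B ∈ Γ → G3 Γ A → G3 (B :: Γ) Q → G3 Γ Q

/-- G3 with an ordered auxiliary context Ψ: Γ; Ψ ⊢ Q -/
inductive G3Psi : List UProp → List UProp → UProp → Prop
  | cons {Γ P Ψ Q} : G3Psi (P :: Γ) Ψ Q → G3Psi Γ (P :: Ψ) Q
  | nil {Γ Q} : G3 Γ Q → G3Psi Γ [] Q

/- Erasure -/
mutual
def eraseP : PProp → UProp
  | .atom p => .atom p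
  | .down A => eraseN A
  | .bot => .bot
  | .or A B => .or (eraseP A) (eraseP B)
  | .top => .top
  | .and A B => .and (eraseP A) (eraseP B)
def eraseN : NProp → UProp
  | .atom p => .atom p
  | .up A => eraseP A
  | .imp A B => .imp (eraseP A) (eraseN B)
  | .top => .top
  | .and A B => .and (eraseN A) (eraseN B)
end

def eraseHyp : Hyp → UProp
  | .neg A => eraseN A
  | .susp A => eraseP A

def eraseCtx (Γ : Ctx) : List UProp := Γ.map eraseHyp

def eraseSucc : Succ → UProp
  | .pos A => eraseP A
  | .neg A => eraseN A
  | .susp A => eraseN A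

/- Identity expansion by structural recursion on the proposition, without cut or focal
substitution. Expanding A⁺ on the left takes a continuation that turns a right focus on A⁺,
in any extension of the context, into the remaining inversion; expanding A⁻ on the right
takes the dual continuation, which closes any left focus on A⁻. Contexts only grow along the
way, so the continuations are Kripke-style and weakening of right focus is the one structural
fact needed. For the theorem, the continuation is foc_L on the hypothesis A⁻ itself. -/

theorem RFoc.mono {Γ : Ctx} {A : PProp} (h : RFoc Γ A) :
    ∀ Γ', Γ ⊆ Γ' → RFoc Γ' A := by
  induction h using RFoc.rec
    (motive_2 := fun Γ Ω U _ => ∀ Γ', Γ ⊆ Γ' → Inv Γ' Ω U)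
    (motive_3 := fun Γ A U _ => ∀ Γ', Γ ⊆ Γ' → LFoc Γ' A U) with
  | idP m => exact fun _ s => .idP (s m)
  | downR _ ih => exact fun _ s => .downR (ih _ s)
  | orR1 _ ih => exact fun _ s => .orR1 (ih _ s)
  | orR2 _ ih => exact fun _ s => .orR2 (ih _ s)
  | topR => exact fun _ _ => .topR
  | andR _ _ ih₁ ih₂ => exact fun _ s => .andR (ih₁ _ s) (ih₂ _ s)
  | focR _ ih _ s => exact .focR (ih _ s)
  | focL m st _ ih _ s => exact .focL (s m) st (ih _ s)
  | etaP _ ih _ s => exact .etaP (ih _ (List.cons_subset_cons _ s))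
  | downL _ ih _ s => exact .downL (ih _ (List.cons_subset_cons _ s))
  | botL _ _ => exact .botL
  | orL _ _ ih₁ ih₂ _ s => exact .orL (ih₁ _ s) (ih₂ _ s)
  | topPL _ ih _ s => exact .topPL (ih _ s)
  | andPL _ ih _ s => exact .andPL (ih _ s)
  | etaN _ ih _ s => exact .etaN (ih _ s)
  | upR _ ih _ s => exact .upR (ih _ s)
  | impR _ ih _ s => exact .impR (ih _ s)
  | topNR _ _ => exact .topNR
  | andNR _ _ ih₁ ih₂ _ s => exact .andNR (ih₁ _ s) (ih₂ _ s)
  | idN _ _ => exact .idN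
  | upL _ ih _ s => exact .upL (ih _ s)
  | impL _ _ ih₁ ih₂ _ s => exact .impL (ih₁ _ s) (ih₂ _ s)
  | andL1 _ ih _ s => exact .andL1 (ih _ s)
  | andL2 _ ih _ s => exact .andL2 (ih _ s)

/-- `Γ` behaves as if it contained the hypothesis `A⁻`. -/
def LeftFocusable (Γ : Ctx) (A : NProp) : Prop :=
  ∀ Γ', Γ ⊆ Γ' → ∀ U, Succ.stable U → LFoc Γ' A U → Inv Γ' [] U

namespace LeftFocusable

variable {Γ : Ctx}

theorem of_mem {A : NProp} (h : Hyp.neg A ∈ Γ) : LeftFocusable Γ A :=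
  fun _ s _ st d => .focL (s h) st d

theorem mono {Γ' : Ctx} {A : NProp} (h : LeftFocusable Γ A) (s : Γ ⊆ Γ') :
    LeftFocusable Γ' A :=
  fun Γ'' s' => h Γ'' (List.Subset.trans s s')

theorem and_left {A B : NProp} (h : LeftFocusable Γ (.and A B)) : LeftFocusable Γ A :=
  fun Γ' s U st d => h Γ' s U st (.andL1 d)

theorem and_right {A B : NProp} (h : LeftFocusable Γ (.and A B)) : LeftFocusable Γ B :=
  fun Γ' s U st d => h Γ' s U st (.andL2 d)

theorem imp {A : PProp} {B : NProp} (h : LeftFocusable Γ (.imp A B)) (hA : RFoc Γ A) :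
    LeftFocusable Γ B :=
  fun Γ' s U st d => h Γ' s U st (.impL (hA.mono _ s) d)

end LeftFocusable

mutual

theorem Inv.cons_of_rFoc : ∀ (A : PProp) {Γ : Ctx} {Ω : List PProp} {U : Succ},
    (∀ Γ', Γ ⊆ Γ' → RFoc Γ' A → Inv Γ' Ω U) → Inv Γ (A :: Ω) U
  | .atom _, _, _, _, k => .etaP (k _ (List.subset_cons_self _ _) (.idP List.mem_cons_self))
  | .down A, _, _, _, k =>
      .downL (k _ (List.subset_cons_self _ _)
        (.downR (Inv.neg_of_leftFocusable A (.of_mem List.mem_cons_self))))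
  | .bot, _, _, _, _ => .botL
  | .or A B, _, _, _, k =>
      .orL (Inv.cons_of_rFoc A fun Γ' s hA => k Γ' s (.orR1 hA))
        (Inv.cons_of_rFoc B fun Γ' s hB => k Γ' s (.orR2 hB))
  | .top, _, _, _, k => .topPL (k _ (List.Subset.refl _) .topR)
  | .and A B, _, _, _, k =>
      .andPL (Inv.cons_of_rFoc A fun _ s hA =>
        Inv.cons_of_rFoc B fun Γ'' s' hB =>
          k Γ'' (List.Subset.trans s s') (.andR (hA.mono _ s') hB))

theorem Inv.neg_of_leftFocusable : ∀ (A : NProp) {Γ : Ctx},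
    LeftFocusable Γ A → Inv Γ [] (Succ.neg A)
  | .atom _, _, k => .etaN (k _ (List.Subset.refl _) _ trivial .idN)
  | .up A, _, k =>
      .upR (k _ (List.Subset.refl _) _ trivial (.upL (Inv.cons_of_rFoc A fun _ _ => .focR)))
  | .imp A B, _, k =>
      .impR (Inv.cons_of_rFoc A fun _ s hA => Inv.neg_of_leftFocusable B ((k.mono s).imp hA))
  | .top, _, _ => .topNR
  | .and A B, _, k =>
      .andNR (Inv.neg_of_leftFocusable A k.and_left) (Inv.neg_of_leftFocusable B k.and_right)

end

/-- Negative identity principle. -/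
theorem negative_identity :
    ∀ (A : NProp) (Γ : Ctx), Inv (Hyp.neg A :: Γ) [] (Succ.neg A) :=
  fun A _ => Inv.neg_of_leftFocusable A (.of_mem List.mem_cons_self)

end StructuralFocalization
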